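/- Let G=(A,B,E) be a bipartite graph with |A| ≥ 2 and |B| ≥ 2 such that C1(G) = 0, C2(G) = 1, and C3(G) = 0, i.e., every connected component of G is an isolated edge or a block, exactly one component is an isolated edge, and no component is a nonsingular block. Then B(G) = 3. -/

import Mathlib

open SimpleGraph

namespace AugBic

noncomputable section

variable {V : Type*}

/-- Two vertices are biconnected: they are in the same connected component and remain so
after the removal of any single edge or any single vertex other than either of them. -/
def BiconnPair (G : SimpleGraph V) (u v : V) : Prop :=
  G.Reachable u v ∧
  (∀ e ∈ G.edgeSet, (G.deleteEdges {e}).Reachable u v) ∧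
  (∀ w : V, ∀ hu : u ≠ w, ∀ hv : v ≠ w,
    (G.induce {x | x ≠ w}).Reachable ⟨u, hu⟩ ⟨v, hv⟩)

/-- A set of vertices is biconnected if every pair of its vertices is biconnected. -/
def BiconnSet (G : SimpleGraph V) (S : Set V) : Prop :=
  ∀ u ∈ S, ∀ v ∈ S, BiconnPair G u v

/-- A block: (the induced subgraph on) a maximal biconnected set of vertices. -/
def IsBlock (G : SimpleGraph V) (S : Set V) : Prop :=
  S.Nonempty ∧ BiconnSet G S ∧ ∀ T : Set V, S ⊆ T → BiconnSet G T → T = S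

/-- A cut vertex: its removal increases the number of connected components. -/
def IsCutVertex (G : SimpleGraph V) (v : V) : Prop :=
  Nat.card G.ConnectedComponent <
    Nat.card ((G.induce {x | x ≠ v}).ConnectedComponent)

/-- A cut edge: its removal increases the number of connected components. -/
def IsCutEdge (G : SimpleGraph V) (e : Sym2 V) : Prop :=
  e ∈ G.edgeSet ∧
    Nat.card G.ConnectedComponent <
      Nat.card ((G.deleteEdges {e}).ConnectedComponent)

/-- A pendant block: a singular block consisting of a vertex of degree 1, or a
nonsingular block containing exactly one cut vertex. -/
def IsPendantBlock (G : SimpleGraph V) (S : Set V) : Prop :=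
  IsBlock G S ∧
    ((∃ v, S = {v} ∧ (G.neighborSet v).ncard = 1) ∨
     (1 < S.ncard ∧ ∃! v, v ∈ S ∧ IsCutVertex G v))

/-- Λ(G): the set of pendant blocks of `G`. -/
def pendantBlocks (G : SimpleGraph V) : Set (Set V) :=
  {S | IsPendantBlock G S}

/-- A block is of type `P` (for `P = A` or `P = B`) if all its noncut vertices lie in `P`. -/
def TypeOnly (G : SimpleGraph V) (P : Set V) (S : Set V) : Prop :=
  ∀ v ∈ S, ¬IsCutVertex G v → v ∈ P

/-- A block is type AB if it has a noncut vertex in `A` and a noncut vertex in `B`. -/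
def TypeAB (G : SimpleGraph V) (A B : Set V) (S : Set V) : Prop :=
  (∃ v ∈ S, ¬IsCutVertex G v ∧ v ∈ A) ∧ (∃ v ∈ S, ¬IsCutVertex G v ∧ v ∈ B)

/-- A legal pair: two distinct pendant blocks, not both of type A and not both of type B. -/
def LegalPair (G : SimpleGraph V) (A B : Set V) (S T : Set V) : Prop :=
  IsPendantBlock G S ∧ IsPendantBlock G T ∧ S ≠ T ∧
  ¬(TypeOnly G A S ∧ TypeOnly G A T) ∧ ¬(TypeOnly G B S ∧ TypeOnly G B T)

/-- A legal edge: a vertex pair in `A × B` that is not an edge of `G`. -/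
def LegalEdge (G : SimpleGraph V) (A B : Set V) (a b : V) : Prop :=
  a ∈ A ∧ b ∈ B ∧ ¬G.Adj a b

/-- A binding edge for a legal pair: a legal edge joining two noncut vertices,
one from each block of the pair. -/
def BindingEdge (G : SimpleGraph V) (A B : Set V) (S T : Set V) (a b : V) : Prop :=
  LegalEdge G A B a b ∧
  ((a ∈ S ∧ ¬IsCutVertex G a ∧ b ∈ T ∧ ¬IsCutVertex G b) ∨
   (a ∈ T ∧ ¬IsCutVertex G a ∧ b ∈ S ∧ ¬IsCutVertex G b))

/-- A legal matching of a set `Λ'` of pendant blocks: a set of legal pairs between elements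
of `Λ'` such that each element of `Λ'` belongs to at most one pair. -/
def IsLegalMatching (G : SimpleGraph V) (A B : Set V) (Λ' : Set (Set V))
    (N : Set (Set V × Set V)) : Prop :=
  (∀ q ∈ N, q.1 ∈ Λ' ∧ q.2 ∈ Λ' ∧ LegalPair G A B q.1 q.2) ∧
  (∀ q ∈ N, ∀ q' ∈ N, q ≠ q' →
    ({q.1, q.2} ∩ {q'.1, q'.2} : Set (Set V)) = ∅)

/-- M(Λ'): the maximum cardinality of a legal matching of `Λ'`. -/
def maxMatching (G : SimpleGraph V) (A B : Set V) (Λ' : Set (Set V)) : ℕ :=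
  sSup {k | ∃ N, IsLegalMatching G A B Λ' N ∧ N.ncard = k}

/-- R(Λ') = |Λ'| − 2·M(Λ'). -/
def Rnum (G : SimpleGraph V) (A B : Set V) (Λ' : Set (Set V)) : ℕ :=
  Λ'.ncard - 2 * maxMatching G A B Λ'

/-- A graph is componentwise biconnected if every connected component is a block. -/
def ComponentwiseBiconnected (G : SimpleGraph V) : Prop :=
  ∀ c : G.ConnectedComponent, IsBlock G c.supp

/-- D(G,u): the number of connected components of X − {u}, where X is the
connected component of G containing u. -/
def Dnum (G : SimpleGraph V) (u : V) : ℕ :=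
  Nat.card ((G.induce {v | G.Reachable u v ∧ v ≠ u}).ConnectedComponent)

/-- C(G): the number of connected components of G that are not blocks. -/
def Cnum (G : SimpleGraph V) : ℕ :=
  Nat.card {c : G.ConnectedComponent // ¬IsBlock G c.supp}

/-- η(G) = max{ max_u D(G,u) + C(G) − 2, M(Λ(G)) + R(Λ(G)) }. -/
def eta (G : SimpleGraph V) (A B : Set V) : ℕ :=
  max ((⨆ u : V, Dnum G u) + Cnum G - 2)
      (maxMatching G A B (pendantBlocks G) + Rnum G A B (pendantBlocks G))

/-- A biconnector: a set of legal edges whose addition makes `G` componentwise biconnected. -/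
def IsBiconnector (G : SimpleGraph V) (A B : Set V) (L : Set (Sym2 V)) : Prop :=
  (∀ e ∈ L, ∃ a b : V, e = s(a, b) ∧ LegalEdge G A B a b) ∧
  ComponentwiseBiconnected (G ⊔ SimpleGraph.fromEdgeSet L)

/-- B(G): the minimum number of edges of a biconnector of `G`. -/
def Bnum (G : SimpleGraph V) (A B : Set V) : ℕ :=
  sInf {k | ∃ L, IsBiconnector G A B L ∧ L.ncard = k}

/-- A connected component is an isolated edge. -/
def IsIsolatedEdgeComp (G : SimpleGraph V) (c : G.ConnectedComponent) : Prop :=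
  ∃ u v : V, G.Adj u v ∧ c.supp = {u, v}

/-- C1(G): the number of components that are neither isolated edges nor blocks. -/
def C1num (G : SimpleGraph V) : ℕ :=
  Nat.card {c : G.ConnectedComponent // ¬IsIsolatedEdgeComp G c ∧ ¬IsBlock G c.supp}

/-- C2(G): the number of isolated-edge components. -/
def C2num (G : SimpleGraph V) : ℕ :=
  Nat.card {c : G.ConnectedComponent // IsIsolatedEdgeComp G c}

/-- C3(G): the number of components that are nonsingular blocks. -/
def C3num (G : SimpleGraph V) : ℕ :=
  Nat.card {c : G.ConnectedComponent // IsBlock G c.supp ∧ 1 < c.supp.ncard}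

/-- A cut vertex `u` is critical if D(G,u) − 1 = M(Λ(G)) + R(Λ(G)). -/
def Critical (G : SimpleGraph V) (A B : Set V) (u : V) : Prop :=
  IsCutVertex G u ∧
    Dnum G u - 1 = maxMatching G A B (pendantBlocks G) + Rnum G A B (pendantBlocks G)

/-- A cut vertex `u` is massive if D(G,u) − 1 > M(Λ(G)) + R(Λ(G)). -/
def Massive (G : SimpleGraph V) (A B : Set V) (u : V) : Prop :=
  IsCutVertex G u ∧
    maxMatching G A B (pendantBlocks G) + Rnum G A B (pendantBlocks G) < Dnum G u - 1

/-- Vertices of the block tree: blocks (b-vertices), cut vertices and cut edges (c-vertices). -/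
inductive BTV (V : Type*) where
  | blk : Set V → BTV V
  | cv : V → BTV V
  | ce : Sym2 V → BTV V

/-- Valid vertices of the block tree of `G`: nonsingular blocks and singular pendant blocks
(b-vertices), together with cut vertices and cut edges (c-vertices). -/
def IsBTVert (G : SimpleGraph V) : BTV V → Prop
  | .blk S => IsBlock G S ∧ (1 < S.ncard ∨ ∃ v, S = {v} ∧ (G.neighborSet v).ncard = 1)
  | .cv v => IsCutVertex G v
  | .ce e => IsCutEdge G e

/-- Adjacency of the block tree: a nonsingular block is joined to each cut vertex in it,
a cut vertex to each cut edge incident to it, and a cut edge to each singular (pendant)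
block containing one of its endpoints. -/
def btAdj (G : SimpleGraph V) : BTV V → BTV V → Prop
  | .blk _, .blk _ => False
  | .blk S, .cv c => 1 < S.ncard ∧ c ∈ S
  | .blk S, .ce e => ∃ v, S = {v} ∧ v ∈ e
  | .cv c, .blk S => 1 < S.ncard ∧ c ∈ S
  | .cv _, .cv _ => False
  | .cv c, .ce e => c ∈ e
  | .ce e, .blk S => ∃ v, S = {v} ∧ v ∈ e
  | .ce e, .cv c => c ∈ e
  | .ce _, .ce _ => False

/-- The vertex type of the block tree Ψ(G). -/
abbrev BTVert (G : SimpleGraph V) := {x : BTV V // IsBTVert G x}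

/-- The block tree Ψ(G). -/
def blockTree (G : SimpleGraph V) : SimpleGraph (BTVert G) where
  Adj x y := btAdj G x.1 y.1
  symm := by
    refine ⟨?_⟩
    rintro ⟨x, hx⟩ ⟨y, hy⟩ h
    cases x <;> cases y <;> simp_all [btAdj]
  loopless := by
    refine ⟨?_⟩
    rintro ⟨x, hx⟩ h
    cases x <;> simp_all [btAdj]

/-- Degree of a vertex of the block tree. -/
def btDeg (G : SimpleGraph V) (x : BTVert G) : ℕ :=
  Nat.card ((blockTree G).neighborSet x)

/-- A path is branchless if all its internal vertices have degree two. -/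
def Branchless {W : Type*} (T : SimpleGraph W) {x y : W} (p : T.Walk x y) : Prop :=
  p.IsPath ∧ ∀ z ∈ p.support, z ≠ x → z ≠ y → Nat.card (T.neighborSet z) = 2

/-- A leaf clings to a vertex `v` if there is a branchless path between it and `v`. -/
def Clings {W : Type*} (T : SimpleGraph W) (l v : W) : Prop :=
  ∃ p : T.Walk l v, Branchless T p


/-!
Every component of `G` other than the isolated edge is a single vertex, so `G` has exactly one
edge `ab`, with `a ∈ A` and `b ∈ B`. Picking `a' ∈ A` and `b' ∈ B` different from them, the
three legal edges `ba'`, `a'b'`, `b'a` close the 4-cycle `a b a' b'`, which is biconnected, so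
`B(G) ≤ 3`. Conversely, after adding any biconnector the edge `ab` lies in a block, so `a` and
`b` are joined by a path avoiding `ab`; it consists of legal edges, which go between `A` and
`B`, so it has length at least 3 and the biconnector has at least 3 edges.
-/

theorem biconnPair_self (H : SimpleGraph V) (v : V) : BiconnPair H v v :=
  ⟨.rfl, fun _ _ => .rfl, fun _ _ _ => .rfl⟩

theorem BiconnSet.mono {H : SimpleGraph V} {S T : Set V} (hT : BiconnSet H T) (hST : S ⊆ T) :
    BiconnSet H S :=
  fun u hu v hv => hT u (hST hu) v (hST hv)

theorem isBlock_supp_of_biconnSet {H : SimpleGraph V} (c : H.ConnectedComponent)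
    (hc : BiconnSet H c.supp) : IsBlock H c.supp := by
  refine ⟨c.nonempty_supp, hc, fun T hcT hT => subset_antisymm (fun t ht => ?_) hcT⟩
  obtain ⟨v, hv⟩ := c.nonempty_supp
  rw [ConnectedComponent.mem_supp_iff] at hv ⊢
  rw [← hv]
  exact ConnectedComponent.sound (hT t ht v (hcT hv)).1

theorem eq_of_reachable_of_forall_not_adj {H : SimpleGraph V} {w z : V}
    (hw : ∀ y, ¬H.Adj w y) (h : H.Reachable w z) : w = z := by
  obtain ⟨p⟩ := h
  cases p with
  | nil => rfl
  | cons hadj _ => exact (hw _ hadj).elim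

theorem componentwiseBiconnected_of_biconnSet {H : SimpleGraph V} {S : Set V}
    (hS : BiconnSet H S) (hadj : ∀ u v, H.Adj u v → u ∈ S) : ComponentwiseBiconnected H := by
  intro c
  apply isBlock_supp_of_biconnSet
  by_cases hc : c.supp ⊆ S
  · exact hS.mono hc
  · -- a vertex of `c` outside `S` is isolated, so `c` is a single vertex
    obtain ⟨w, hw, hwS⟩ := Set.not_subset.mp hc
    have hw_eq : ∀ u ∈ c.supp, w = u := fun u hu =>
      eq_of_reachable_of_forall_not_adj (fun y h => hwS (hadj w y h))
        (ConnectedComponent.exact (hw.trans hu.symm))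
    intro u hu v hv
    rw [← hw_eq u hu, ← hw_eq v hv]
    exact biconnPair_self H w

theorem reachable_induce_of_chain {K : SimpleGraph V} {s : Set V} {y : ℕ → V} {m : ℕ}
    (hs : ∀ j ≤ m, y j ∈ s) (hadj : ∀ j < m, K.Adj (y j) (y (j + 1))) {a b : ℕ}
    (ha : a ≤ m) (hb : b ≤ m) :
    (K.induce s).Reachable ⟨y a, hs a ha⟩ ⟨y b, hs b hb⟩ := by
  have from_zero : ∀ a (ha : a ≤ m),
      (K.induce s).Reachable ⟨y 0, hs 0 (Nat.zero_le m)⟩ ⟨y a, hs a ha⟩ := by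
    intro a ha
    induction a with
    | zero => rfl
    | succ a ih => exact (ih (by omega)).trans (Adj.reachable (hadj a (by omega)))
  exact (from_zero a ha).symm.trans (from_zero b hb)

theorem reachable_of_chain {K : SimpleGraph V} {y : ℕ → V} {m : ℕ}
    (hadj : ∀ j < m, K.Adj (y j) (y (j + 1))) {a b : ℕ} (ha : a ≤ m) (hb : b ≤ m) :
    K.Reachable (y a) (y b) :=
  (reachable_induce_of_chain (s := Set.univ) (fun _ _ => trivial) hadj ha hb).map
    (Embedding.induce _).toHom

section Cycle

variable {H : SimpleGraph V} {n : ℕ} {x : ZMod n → V}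

theorem exists_add_natCast_eq [NeZero n] (k i : ZMod n) : ∃ j < n, k + (j : ZMod n) = i :=
  ⟨(i - k).val, (i - k).val_lt, by rw [ZMod.natCast_zmod_val, add_sub_cancel]⟩

theorem add_natCast_ne_self {j : ℕ} (h0 : 0 < j) (hj : j < n) (k : ZMod n) :
    k + (j : ZMod n) ≠ k := by
  intro h
  rw [add_eq_left, ZMod.natCast_eq_zero_iff] at h
  exact absurd (Nat.le_of_dvd h0 h) (by omega)

theorem adj_add_natCast_succ (hcyc : ∀ i, H.Adj (x i) (x (i + 1))) (k : ZMod n) (j : ℕ) :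
    H.Adj (x (k + j)) (x (k + (j + 1 : ℕ))) := by
  rw [Nat.cast_succ, ← add_assoc]
  exact hcyc _

theorem reachable_deleteEdges_of_cycle [NeZero n] (hn : 3 ≤ n) (hx : Function.Injective x)
    (hcyc : ∀ i, H.Adj (x i) (x (i + 1))) (e : Sym2 V) (i i' : ZMod n) :
    (H.deleteEdges {e}).Reachable (x i) (x i') := by
  -- removing the edge `s(x k, x (k + 1))` leaves the arc from `x (k + 1)` round to `x k`
  obtain ⟨k, hk⟩ :
      ∃ k : ZMod n, ∀ j < n - 1, e ≠ s(x (k + j), x (k + (j + 1 : ℕ))) := by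
    by_cases he : ∃ k, e = s(x k, x (k + 1))
    · obtain ⟨k, rfl⟩ := he
      refine ⟨k + 1, fun j hj h => ?_⟩
      rcases Sym2.eq_iff.mp h with ⟨h1, -⟩ | ⟨h1, h2⟩
      · exact add_natCast_ne_self (j := j + 1) (by omega) (by omega) k
          (by have := hx h1; push_cast at this ⊢; linear_combination -this)
      · have hj0 : j = 0 := by
          by_contra hj0
          exact add_natCast_ne_self (by omega) (by omega) (k + 1) (hx h2).symm
        subst hj0
        exact add_natCast_ne_self (j := 2) (by omega) (by omega) k
          (by have := hx h1; push_cast at this ⊢; linear_combination -this)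
    · push Not at he
      exact ⟨0, fun j _ h => he (0 + j) (by rw [h, Nat.cast_succ, add_assoc])⟩
  obtain ⟨a, ha, rfl⟩ := exists_add_natCast_eq k i
  obtain ⟨b, hb, rfl⟩ := exists_add_natCast_eq k i'
  exact reachable_of_chain (y := fun j => x (k + j))
    (fun j hj => deleteEdges_adj.mpr ⟨adj_add_natCast_succ hcyc k j, fun h => hk j hj h.symm⟩)
    (Nat.le_pred_of_lt ha) (Nat.le_pred_of_lt hb)

theorem reachable_induce_ne_of_cycle [NeZero n] (hn : 2 ≤ n) (hx : Function.Injective x)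
    (hcyc : ∀ i, H.Adj (x i) (x (i + 1))) {w : V} {i i' : ZMod n} (hi : x i ≠ w)
    (hi' : x i' ≠ w) : (H.induce {z | z ≠ w}).Reachable ⟨x i, hi⟩ ⟨x i', hi'⟩ := by
  -- removing `w = x k` leaves the arc from `x (k + 1)` round to `x (k - 1)`
  obtain ⟨k, m, hmem, hm⟩ : ∃ (k : ZMod n) (m : ℕ),
      (∀ j ≤ m, x (k + j) ≠ w) ∧ ∀ i, x i ≠ w → ∃ j ≤ m, k + j = i := by
    by_cases hw : w ∈ Set.range x
    · obtain ⟨k, rfl⟩ := hw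
      refine ⟨k + 1, n - 2,
        fun j hj h => add_natCast_ne_self (j := j + 1) (by omega) (by omega) k ?_, fun i hi => ?_⟩
      · have := hx h; push_cast at this ⊢; linear_combination this
      · obtain ⟨j, hj, rfl⟩ := exists_add_natCast_eq (k + 1) i
        refine ⟨j, ?_, rfl⟩
        by_contra hjn
        obtain rfl : j = n - 1 := by omega
        apply hi
        rw [Nat.cast_pred (by omega), ZMod.natCast_self]
        ring_nf
    · exact ⟨0, n - 1, fun j _ h => hw ⟨_, h⟩, fun i _ =>
        (exists_add_natCast_eq 0 i).imp fun j ⟨hj, h⟩ => ⟨Nat.le_pred_of_lt hj, h⟩⟩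
  obtain ⟨a, ha, rfl⟩ := hm i hi
  obtain ⟨b, hb, rfl⟩ := hm i' hi'
  exact reachable_induce_of_chain (s := {z | z ≠ w}) (y := fun j => x (k + j)) hmem
    (fun j _ => adj_add_natCast_succ hcyc k j) ha hb

theorem biconnSet_range_of_cycle [NeZero n] (hn : 3 ≤ n) (hx : Function.Injective x)
    (hcyc : ∀ i, H.Adj (x i) (x (i + 1))) : BiconnSet H (Set.range x) := by
  rintro _ ⟨i, rfl⟩ _ ⟨i', rfl⟩
  have hdel := reachable_deleteEdges_of_cycle hn hx hcyc
  exact ⟨(hdel s(x i, x i') i i').mono (H.deleteEdges_le _), fun e _ => hdel e i i',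
    fun _ hi hi' => reachable_induce_ne_of_cycle (by omega) hx hcyc hi hi'⟩

end Cycle

theorem _root_.SimpleGraph.Walk.IsTrail.length_le_ncard {K : SimpleGraph V} {u v : V}
    {p : K.Walk u v} (hp : p.IsTrail) {L : Set (Sym2 V)} (hL : L.Finite)
    (h : ∀ e ∈ p.edges, e ∈ L) : p.length ≤ L.ncard := by
  classical
  rw [← p.length_edges, ← List.toFinset_card_of_nodup hp.edges_nodup, ← Set.ncard_coe_finset]
  exact Set.ncard_le_ncard (fun e he => h e (List.mem_toFinset.mp he)) hL

theorem three_le_length_of_not_adj {K : SimpleGraph V} {A B : Set V} (hAB : Disjoint A B)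
    (hK : ∀ x y, K.Adj x y → (x ∈ A ∧ y ∈ B) ∨ (x ∈ B ∧ y ∈ A)) {a b : V}
    (ha : a ∈ A) (hb : b ∈ B) (hab : ¬K.Adj a b) (p : K.Walk a b) : 3 ≤ p.length := by
  have hnA : ∀ {x}, x ∈ B → x ∉ A := fun hx hxA => hAB.ne_of_mem hxA hx rfl
  match p with
  | .nil => exact absurd ha (hnA hb)
  | .cons h .nil => exact absurd h hab
  | .cons (v := x) h₁ (.cons h₂ .nil) =>
    have hxB : x ∈ B := (hK a x h₁).elim And.right fun h => absurd ha (hnA h.1)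
    have hxA : x ∈ A := (hK x b h₂).elim And.left fun h => absurd h.2 (hnA hb)
    exact absurd hxA (hnA hxB)
  | .cons _ (.cons _ (.cons _ _)) => simp

theorem exists_edgeSet_eq_singleton [Finite V] {G : SimpleGraph V} (hC1 : C1num G = 0)
    (hC2 : C2num G = 1) (hC3 : C3num G = 0) : ∃ u v, G.Adj u v ∧ G.edgeSet = {s(u, v)} := by
  obtain ⟨hsub, ⟨c₀, hc₀_iso⟩⟩ := Nat.card_eq_one_iff_unique.mp hC2
  have ⟨u, v, huv, hc₀⟩ := hc₀_iso
  refine ⟨u, v, huv, Set.eq_singleton_iff_unique_mem.mpr ⟨huv, fun e he => ?_⟩⟩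
  induction e using Sym2.ind with | _ x y => ?_
  set c := G.connectedComponentMk x
  have hx : x ∈ c.supp := rfl
  have hy : y ∈ c.supp := (ConnectedComponent.sound (G.mem_edgeSet.mp he).reachable).symm
  have hc_ncard : 1 < c.supp.ncard :=
    (Set.one_lt_ncard_iff c.supp.toFinite).mpr ⟨x, y, hx, hy, (G.mem_edgeSet.mp he).ne⟩
  have hc_not_block : ¬IsBlock G c.supp := fun hblock =>
    (Finite.card_eq_zero_iff.mp hC3).false ⟨c, hblock, hc_ncard⟩
  have hc_iso : IsIsolatedEdgeComp G c := by
    by_contra hiso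
    exact (Finite.card_eq_zero_iff.mp hC1).false ⟨c, hiso, hc_not_block⟩
  have hc : c = c₀ :=
    congrArg Subtype.val (Subsingleton.elim (⟨c, hc_iso⟩ : {c // _}) ⟨c₀, hc₀_iso⟩)
  rw [hc, hc₀] at hx hy
  rcases hx with rfl | rfl <;> rcases hy with rfl | rfl
  all_goals first
    | exact absurd rfl (G.mem_edgeSet.mp he).ne
    | rfl
    | exact Sym2.eq_swap

theorem three_le_ncard_of_isBiconnector [Finite V] {G : SimpleGraph V} {A B : Set V}
    (hAB : Disjoint A B) {a b : V} (hE : G.edgeSet = {s(a, b)}) (ha : a ∈ A) (hb : b ∈ B)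
    {L : Set (Sym2 V)} (hL : IsBiconnector G A B L) : 3 ≤ L.ncard := by
  set H := G ⊔ fromEdgeSet L
  set K := H.deleteEdges {s(a, b)}
  have hab : H.Adj a b := Or.inl (G.mem_edgeSet.mp (hE ▸ rfl))
  have hK_L : ∀ e ∈ K.edgeSet, e ∈ L := by
    intro e he
    rw [edgeSet_deleteEdges, edgeSet_sup, edgeSet_fromEdgeSet, hE] at he
    obtain ⟨he | he, hne⟩ := he
    exacts [absurd he hne, he.1]
  have hK_bip : ∀ x y, K.Adj x y → (x ∈ A ∧ y ∈ B) ∨ (x ∈ B ∧ y ∈ A) := by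
    intro x y hxy
    obtain ⟨a', b', he, ha', hb', -⟩ := hL.1 _ (hK_L _ (K.mem_edgeSet.mpr hxy))
    rcases Sym2.eq_iff.mp he with ⟨rfl, rfl⟩ | ⟨rfl, rfl⟩
    exacts [Or.inl ⟨ha', hb'⟩, Or.inr ⟨hb', ha'⟩]
  -- `a` and `b` lie in one block of `H`, so they stay connected once the edge `ab` is removed
  have hblock := hL.2 (H.connectedComponentMk a)
  obtain ⟨p⟩ : K.Reachable a b :=
    (hblock.2.1 a rfl b (ConnectedComponent.sound hab.reachable).symm).2.1 s(a, b) hab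
  classical
  calc 3 ≤ p.toPath.val.length :=
        three_le_length_of_not_adj hAB hK_bip ha hb (fun h => (deleteEdges_adj.mp h).2 rfl) _
    _ ≤ L.ncard := p.toPath.2.isTrail.length_le_ncard L.toFinite fun e he =>
        hK_L e (p.toPath.val.edges_subset_edgeSet he)

theorem isBiconnector_of_fourCycle {G : SimpleGraph V} {A B : Set V} (hAB : Disjoint A B)
    {a b a' b' : V} (hE : G.edgeSet = {s(a, b)}) (ha : a ∈ A) (hb : b ∈ B) (ha' : a' ∈ A)
    (hb' : b' ∈ B) (haa' : a ≠ a') (hbb' : b ≠ b') :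
    IsBiconnector G A B {s(b, a'), s(a', b'), s(b', a)} := by
  have hG : ∀ x y, G.Adj x y ↔ s(x, y) = s(a, b) := fun x y => by rw [← mem_edgeSet, hE]; rfl
  have hab := hAB.ne_of_mem ha hb
  have hab' := hAB.ne_of_mem ha hb'
  have ha'b := hAB.ne_of_mem ha' hb
  have ha'b' := hAB.ne_of_mem ha' hb'
  refine ⟨?_, ?_⟩
  · simp only [Set.mem_insert_iff, Set.mem_singleton_iff]
    rintro e (rfl | rfl | rfl)
    · exact ⟨a', b, Sym2.eq_swap, ha', hb, by rw [hG]; simp [haa'.symm, ha'b]⟩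
    · exact ⟨a', b', rfl, ha', hb', by rw [hG]; simp [haa'.symm, ha'b]⟩
    · exact ⟨a, b', Sym2.eq_swap, ha, hb', by rw [hG]; simp [hbb'.symm, hab]⟩
  · set H := G ⊔ fromEdgeSet {s(b, a'), s(a', b'), s(b', a)}
    set x : ZMod 4 → V := ![a, b, a', b']
    have hinj : Function.Injective x := by
      intro i j h
      fin_cases i <;> fin_cases j <;> simp [x] at h ⊢ <;> grind
    have hcyc : ∀ i, H.Adj (x i) (x (i + 1)) := by
      intro i
      fin_cases i
      · show H.Adj a b
        exact Or.inl ((hG a b).mpr rfl)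
      · show H.Adj b a'
        exact Or.inr ⟨by simp, ha'b.symm⟩
      · show H.Adj a' b'
        exact Or.inr ⟨by simp, ha'b'⟩
      · show H.Adj b' a
        exact Or.inr ⟨by simp, hab'.symm⟩
    have hrange : ({a, b, a', b'} : Set V) ⊆ Set.range x := by
      rintro u (rfl | rfl | rfl | rfl)
      exacts [⟨0, rfl⟩, ⟨1, rfl⟩, ⟨2, rfl⟩, ⟨3, rfl⟩]
    refine componentwiseBiconnected_of_biconnSet
      (biconnSet_range_of_cycle (by norm_num) hinj hcyc) fun u v huv => hrange ?_
    rw [sup_adj, fromEdgeSet_adj, hG] at huv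
    simp only [Set.mem_insert_iff, Set.mem_singleton_iff, Sym2.eq_iff] at huv ⊢
    tauto

theorem ncard_fourCycle_edges {a b a' b' : V} (haa' : a ≠ a') (hbb' : b ≠ b')
    (ha'b' : a' ≠ b') :
    ({s(b, a'), s(a', b'), s(b', a)} : Set (Sym2 V)).ncard = 3 :=
  Set.ncard_eq_three.mpr ⟨_, _, _, by grind [Sym2.eq_iff], by grind [Sym2.eq_iff],
    by grind [Sym2.eq_iff], rfl⟩

theorem stmt_10_general [Fintype V] (G : SimpleGraph V) (A B : Set V)
    (hdisj : Disjoint A B)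
    (hbip : ∀ u v : V, G.Adj u v → (u ∈ A ∧ v ∈ B) ∨ (u ∈ B ∧ v ∈ A))
    (hA : 2 ≤ A.ncard) (hB : 2 ≤ B.ncard)
    (hC1 : C1num G = 0) (hC2 : C2num G = 1) (hC3 : C3num G = 0) :
    Bnum G A B = 3 := by
  obtain ⟨u, v, huv, hE⟩ := exists_edgeSet_eq_singleton hC1 hC2 hC3
  obtain ⟨a, b, ha, hb, hE⟩ : ∃ a b, a ∈ A ∧ b ∈ B ∧ G.edgeSet = {s(a, b)} := by
    rcases hbip u v huv with ⟨hu, hv⟩ | ⟨hu, hv⟩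
    · exact ⟨u, v, hu, hv, hE⟩
    · exact ⟨v, u, hv, hu, by rw [hE, Sym2.eq_swap]⟩
  obtain ⟨a', ha', ha'a⟩ := Set.exists_ne_of_one_lt_ncard (show 1 < A.ncard by omega) a
  obtain ⟨b', hb', hb'b⟩ := Set.exists_ne_of_one_lt_ncard (show 1 < B.ncard by omega) b
  refine IsLeast.csInf_eq ⟨⟨_, isBiconnector_of_fourCycle hdisj hE ha hb ha' hb' ha'a.symm
    hb'b.symm, ncard_fourCycle_edges ha'a.symm hb'b.symm (hdisj.ne_of_mem ha' hb')⟩, ?_⟩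
  rintro k ⟨L, hL, rfl⟩
  exact three_le_ncard_of_isBiconnector hdisj hE ha hb hL

theorem stmt_10 [Fintype V] (G : SimpleGraph V) (A B : Set V)
    (hdisj : Disjoint A B) (hcov : A ∪ B = Set.univ)
    (hbip : ∀ u v : V, G.Adj u v → (u ∈ A ∧ v ∈ B) ∨ (u ∈ B ∧ v ∈ A))
    (hA : 2 ≤ A.ncard) (hB : 2 ≤ B.ncard)
    (hC1 : C1num G = 0) (hC2 : C2num G = 1) (hC3 : C3num G = 0) :
    Bnum G A B = 3 :=
  stmt_10_general G A B hdisj hbip hA hB hC1 hC2 hC3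

end
end AugBic
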